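/- Every unitary matrix U ∈ U(n) can be written as U = V Δ W where V, W ∈ SO(n) and Δ is a diagonal unitary matrix (the normalized unitary KAK decomposition). -/

import Mathlib

open Matrix Module.End

section Aux

variable {n : ℕ}

private lemma map_ofReal_mul (M N : Matrix (Fin n) (Fin n) ℝ) :
    (M * N).map (Complex.ofReal) = M.map Complex.ofReal * N.map Complex.ofReal :=
  Matrix.map_mul (f := Complex.ofRealHom)

private lemma map_ofReal_inj {M N : Matrix (Fin n) (Fin n) ℝ}
    (h : M.map Complex.ofReal = N.map Complex.ofReal) : M = N := by
  ext i j
  have := congrFun (congrFun h i) j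
  simpa [Matrix.map_apply, Complex.ofReal_inj] using this

private lemma star_map_ofReal (M : Matrix (Fin n) (Fin n) ℝ) :
    star (M.map Complex.ofReal) = (star M).map Complex.ofReal := by
  ext i j
  simp [Matrix.star_apply, Matrix.map_apply, Complex.conj_ofReal]

private lemma map_ofReal_one : (1 : Matrix (Fin n) (Fin n) ℝ).map Complex.ofReal = 1 := by
  ext i j
  by_cases h : i = j <;> simp [Matrix.map_apply, Matrix.one_apply, h]

/-- sign fixing -/
private lemma sign_fix (hn : 0 < n) (V : Matrix (Fin n) (Fin n) ℝ)
    (hV : V ∈ Matrix.orthogonalGroup (Fin n) ℝ) :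
    ∃ V' : Matrix (Fin n) (Fin n) ℝ, ∃ ε : Fin n → ℝ,
      V' ∈ Matrix.orthogonalGroup (Fin n) ℝ ∧ V'.det = 1 ∧ (∀ i, ε i ^ 2 = 1) ∧
      V = V' * diagonal ε := by
  classical
  have hdet : V.det = 1 ∨ V.det = -1 := by
    have h1 : star V * V = 1 := (Matrix.mem_orthogonalGroup_iff' (Fin n) ℝ).mp hV
    have h2 : V.det * V.det = 1 := by
      have := congrArg Matrix.det h1
      simpa [Matrix.det_mul, Matrix.star_eq_conjTranspose, Matrix.det_conjTranspose,
        mul_comm] using this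
    rcases mul_self_eq_one_iff.mp h2 with h | h
    · exact Or.inl h
    · exact Or.inr h
  rcases hdet with h | h
  · exact ⟨V, fun _ => 1, hV, h, fun i => one_pow 2, by simp⟩
  · set ε : Fin n → ℝ := fun i => if i = ⟨0, hn⟩ then -1 else 1 with hε
    have hε2 : ∀ i, ε i ^ 2 = 1 := by
      intro i; by_cases hi : i = ⟨0, hn⟩ <;> simp [hε, hi]
    have hdiagO : diagonal ε ∈ Matrix.orthogonalGroup (Fin n) ℝ := by
      rw [Matrix.mem_orthogonalGroup_iff]
      ext i j
      rcases eq_or_ne i j with rfl | hij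
      · simp [Matrix.mul_apply, Matrix.star_apply, Matrix.diagonal_apply, ← pow_two, hε2]
      · simp [Matrix.mul_apply, Matrix.star_apply, Matrix.diagonal_apply, hij,
          Matrix.one_apply, Finset.sum_ite_eq]
    have hdd : diagonal ε * diagonal ε = 1 := by
      rw [Matrix.diagonal_mul_diagonal]
      ext i j
      rcases eq_or_ne i j with rfl | hij
      · simp [← pow_two, hε2]
      · simp [Matrix.diagonal_apply_ne _ hij, Matrix.one_apply_ne hij]
    have hdetε : (diagonal ε).det = -1 := by
      rw [Matrix.det_diagonal, hε]
      rw [Finset.prod_ite_eq' Finset.univ (⟨0, hn⟩ : Fin n) (fun _ => (-1 : ℝ))]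
      simp
    refine ⟨V * diagonal ε, ε, mul_mem hV hdiagO, ?_, hε2, ?_⟩
    · rw [Matrix.det_mul, h, hdetε]; ring
    · rw [Matrix.mul_assoc, hdd, Matrix.mul_one]

end Aux

theorem simul_diag' {n : ℕ} {A B : Matrix (Fin n) (Fin n) ℝ}
    (hA : A.IsHermitian) (hB : B.IsHermitian) (hAB : A * B = B * A) :
    ∃ W : Matrix (Fin n) (Fin n) ℝ, W ∈ Matrix.orthogonalGroup (Fin n) ℝ ∧
      ∃ μ ν : Fin n → ℝ, star W * A * W = diagonal μ ∧ star W * B * W = diagonal ν := by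
  classical
  have hA' := (Matrix.isHermitian_iff_isSymmetric).mp hA
  have hB' := (Matrix.isHermitian_iff_isSymmetric).mp hB
  have h1 : ∀ M N : Matrix (Fin n) (Fin n) ℝ,
      Matrix.toEuclideanLin (M * N) = Matrix.toEuclideanLin M * Matrix.toEuclideanLin N := by
    intro M N
    rw [Matrix.toEuclideanLin_eq_toLin,
      Matrix.toLin_mul (PiLp.basisFun 2 ℝ (Fin n)) (PiLp.basisFun 2 ℝ (Fin n)),
      Module.End.mul_eq_comp]
  have hcomm : Commute (Matrix.toEuclideanLin A) (Matrix.toEuclideanLin B) := by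
    unfold Commute SemiconjBy
    rw [← h1, ← h1, hAB]
  have internal := LinearMap.IsSymmetric.directSum_isInternal_of_commute hA' hB' hcomm
  have orth := LinearMap.IsSymmetric.orthogonalFamily_eigenspace_inf_eigenspace hA' hB'
  set V : ℝ × ℝ → Submodule ℝ (EuclideanSpace ℝ (Fin n)) :=
    fun i => eigenspace (Matrix.toEuclideanLin A) i.2 ⊓ eigenspace (Matrix.toEuclideanLin B) i.1
    with hV
  have internal' : DirectSum.IsInternal (fun i : {i // V i ≠ ⊥} => V i) :=
    (DirectSum.isInternal_ne_bot_iff).mpr internal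
  haveI : Fintype {i // V i ≠ ⊥} := internal.submodule_iSupIndep.fintypeNeBotOfFiniteDimensional
  have orth' : OrthogonalFamily ℝ (fun i : {i // V i ≠ ⊥} => V i)
      (fun i => (V i).subtypeₗᵢ) := fun i j hij => orth (Subtype.coe_injective.ne hij)
  have hn : Module.finrank ℝ (EuclideanSpace ℝ (Fin n)) = n := finrank_euclideanSpace_fin
  set b := internal'.subordinateOrthonormalBasis hn orth' with hb
  set idx : Fin n → {i // V i ≠ ⊥} :=
    fun a => internal'.subordinateOrthonormalBasisIndex hn a orth' with hidx
  have mem : ∀ a, b a ∈ V (idx a) :=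
    fun a => internal'.subordinateOrthonormalBasis_subordinate hn a orth'
  set μ : Fin n → ℝ := fun a => ((idx a : ℝ × ℝ)).2 with hμ
  set ν : Fin n → ℝ := fun a => ((idx a : ℝ × ℝ)).1 with hν
  have mulA : ∀ j, A *ᵥ ⇑(b j) = μ j • ⇑(b j) := by
    intro j
    have h := mem_eigenspace_iff.mp (mem j).1
    simpa [Matrix.toEuclideanLin_apply] using congr(⇑$h)
  have mulB : ∀ j, B *ᵥ ⇑(b j) = ν j • ⇑(b j) := by
    intro j
    have h := mem_eigenspace_iff.mp (mem j).2
    simpa [Matrix.toEuclideanLin_apply] using congr(⇑$h)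
  set W : Matrix (Fin n) (Fin n) ℝ :=
    (EuclideanSpace.basisFun (Fin n) ℝ).toBasis.toMatrix b.toBasis with hW
  have hWO : W ∈ Matrix.orthogonalGroup (Fin n) ℝ :=
    (EuclideanSpace.basisFun (Fin n) ℝ).toMatrix_orthonormalBasis_mem_unitary b
  have hWapply : ∀ i j, W i j = b j i := fun i j => rfl
  have hWmul : ∀ j, W *ᵥ Pi.single j 1 = ⇑(b j) := by
    intro j
    simp only [Matrix.mulVec_single, MulOpposite.op_one, one_smul]
    funext i
    exact hWapply i j
  have hWstar : ∀ j, star W *ᵥ ⇑(b j) = Pi.single j 1 := by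
    intro j
    rw [← hWmul, Matrix.mulVec_mulVec, (Matrix.mem_unitaryGroup_iff'.mp hWO),
      Matrix.one_mulVec]
  have key : ∀ (M : Matrix (Fin n) (Fin n) ℝ) (d : Fin n → ℝ),
      (∀ j, M *ᵥ ⇑(b j) = d j • ⇑(b j)) → star W * M * W = diagonal d := by
    intro M d hM
    apply Matrix.toEuclideanLin.injective
    apply Module.Basis.ext (EuclideanSpace.basisFun (Fin n) ℝ).toBasis
    intro i
    simp only [Matrix.toEuclideanLin_apply, OrthonormalBasis.coe_toBasis,
      EuclideanSpace.basisFun_apply, PiLp.ofLp_single, ← Matrix.mulVec_mulVec,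
      hWmul, hM, Matrix.diagonal_mulVec_single, Matrix.mulVec_smul, hWstar,
      WithLp.toLp_smul, PiLp.toLp_single, mul_one]
    apply PiLp.ext
    intro j
    simp only [PiLp.smul_apply, EuclideanSpace.single_apply, smul_eq_mul, mul_ite, mul_one,
      mul_zero]
  exact ⟨W, hWO, μ, ν, key A μ mulA, key B ν mulB⟩

theorem unitary_KAK (n : ℕ) (U : Matrix (Fin n) (Fin n) ℂ)
    (hU : U ∈ Matrix.unitaryGroup (Fin n) ℂ) :
    ∃ V W : Matrix (Fin n) (Fin n) ℝ,
      V ∈ Matrix.orthogonalGroup (Fin n) ℝ ∧ V.det = 1 ∧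
      W ∈ Matrix.orthogonalGroup (Fin n) ℝ ∧ W.det = 1 ∧
      ∃ d : Fin n → ℂ, (∀ i, ‖d i‖ = 1) ∧
        U = (V.map Complex.ofReal) * Matrix.diagonal d * (W.map Complex.ofReal) := by
  classical
  rcases Nat.eq_zero_or_pos n with hn0 | hn
  · subst hn0
    refine ⟨1, 1, one_mem _, Matrix.det_one, one_mem _, Matrix.det_one,
      Fin.elim0, fun i => i.elim0, Subsingleton.elim _ _⟩
  -- basic unitarity facts
  have hUl : star U * U = 1 := Matrix.mem_unitaryGroup_iff'.mp hU
  have hUr : U * star U = 1 := Matrix.mem_unitaryGroup_iff.mp hU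
  have hUconj : U.map (starRingEnd ℂ) * Uᵀ = 1 := by
    have h := congrArg (fun M => M.map (starRingEnd ℂ)) hUr
    simp only [Matrix.map_mul (f := (starRingEnd ℂ)), Matrix.star_eq_conjTranspose,
      Matrix.conjTranspose, Matrix.map_map] at h
    rw [show Uᵀ.map (⇑(starRingEnd ℂ) ∘ star) = Uᵀ from by ext i j; simp] at h
    rw [show Matrix.map (1 : Matrix (Fin n) (Fin n) ℂ) ⇑(starRingEnd ℂ) = 1 from by
      ext i j; simp [Matrix.map_apply, Matrix.one_apply, apply_ite (starRingEnd ℂ)]] at h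
    exact h
  -- the symmetric unitary matrix S
  set S : Matrix (Fin n) (Fin n) ℂ := Uᵀ * U with hSdef
  have hSsymm : ∀ i j, S j i = S i j := by
    intro i j
    have hs : Sᵀ = S := by rw [hSdef, Matrix.transpose_mul, Matrix.transpose_transpose]
    exact congrFun (congrFun hs i) j
  have hstarUT : star (Uᵀ) = U.map (starRingEnd ℂ) := by
    ext i j
    simp [Matrix.star_apply, Matrix.map_apply]
  have hSunit : star S * S = 1 := by
    rw [hSdef, Matrix.star_mul, hstarUT]
    calc star U * U.map (starRingEnd ℂ) * (Uᵀ * U)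
        = star U * ((U.map (starRingEnd ℂ) * Uᵀ) * U) := by
          simp only [Matrix.mul_assoc]
      _ = star U * U := by rw [hUconj, Matrix.one_mul]
      _ = 1 := hUl
  -- real and imaginary parts
  set A : Matrix (Fin n) (Fin n) ℝ := S.map Complex.re with hAdef
  set B : Matrix (Fin n) (Fin n) ℝ := S.map Complex.im with hBdef
  set A' : Matrix (Fin n) (Fin n) ℂ := A.map Complex.ofReal with hA'def
  set B' : Matrix (Fin n) (Fin n) ℂ := B.map Complex.ofReal with hB'def
  have hAH : A.IsHermitian := by
    show Aᴴ = A
    ext i j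
    simp [Matrix.conjTranspose_apply, Matrix.map_apply, hAdef, hSsymm i j]
  have hBH : B.IsHermitian := by
    show Bᴴ = B
    ext i j
    simp [Matrix.conjTranspose_apply, Matrix.map_apply, hBdef, hSsymm i j]
  have hSplus : S = A' + Complex.I • B' := by
    ext i j
    simp only [Matrix.add_apply, Matrix.smul_apply, Matrix.map_apply, hA'def, hB'def,
      hAdef, hBdef, smul_eq_mul]
    rw [mul_comm]
    exact (Complex.re_add_im _).symm
  have hSminus : star S = A' - Complex.I • B' := by
    ext i j
    simp only [Matrix.star_apply, Matrix.sub_apply, Matrix.smul_apply, Matrix.map_apply,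
      hA'def, hB'def, hAdef, hBdef, smul_eq_mul, hSsymm i j]
    apply Complex.ext <;> simp
  have hkey : A' * A' + B' * B' + Complex.I • (A' * B' - B' * A') = 1 := by
    rw [← hSunit, hSminus, hSplus]
    rw [Matrix.sub_mul, Matrix.mul_add, Matrix.mul_add]
    simp only [Matrix.smul_mul, Matrix.mul_smul, smul_smul, Complex.I_mul_I, neg_one_smul,
      smul_sub]
    abel
  have entry_eq : ∀ (M N : Matrix (Fin n) (Fin n) ℝ) (i j : Fin n),
      (M.map Complex.ofReal * N.map Complex.ofReal) i j = ((M * N) i j : ℂ) := by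
    intro M N i j
    rw [← map_ofReal_mul]
    rfl
  have hAABB : A * A + B * B = 1 := by
    ext i j
    have h := congrFun (congrFun hkey i) j
    simp only [Matrix.add_apply, Matrix.smul_apply, Matrix.sub_apply, hA'def, hB'def,
      entry_eq, smul_eq_mul] at h
    rw [Complex.ext_iff] at h
    obtain ⟨h1, -⟩ := h
    simp only [Complex.add_re, Complex.ofReal_re, Complex.mul_re, Complex.I_re,
      Complex.I_im, Complex.sub_re, Complex.sub_im, Complex.ofReal_im, zero_mul, one_mul,
      sub_self, sub_zero, zero_sub, mul_zero] at h1
    rcases eq_or_ne i j with rfl | hij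
    · simpa [Matrix.one_apply, Matrix.add_apply] using h1
    · simpa [Matrix.one_apply, hij, Matrix.add_apply] using h1
  have hABBA : A * B = B * A := by
    ext i j
    have h := congrFun (congrFun hkey i) j
    simp only [Matrix.add_apply, Matrix.smul_apply, Matrix.sub_apply, hA'def, hB'def,
      entry_eq, smul_eq_mul] at h
    rw [Complex.ext_iff] at h
    obtain ⟨-, h2⟩ := h
    simp only [Complex.add_im, Complex.ofReal_im, Complex.mul_im, Complex.I_re,
      Complex.I_im, Complex.sub_re, Complex.sub_im, Complex.ofReal_re, zero_mul, one_mul,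
      add_zero, zero_add, mul_zero] at h2
    rcases eq_or_ne i j with rfl | hij
    · simpa [Matrix.one_apply, sub_eq_zero] using h2
    · simpa [Matrix.one_apply, hij, sub_eq_zero] using h2
  -- simultaneous diagonalization
  obtain ⟨W, hWO, μ, ν, hdA, hdB⟩ := simul_diag' hAH hBH hABBA
  have hW1 : star W * W = 1 := (Matrix.mem_orthogonalGroup_iff' (Fin n) ℝ).mp hWO
  have hW2 : W * star W = 1 := (Matrix.mem_orthogonalGroup_iff (Fin n) ℝ).mp hWO
  have hWl : ∀ X : Matrix (Fin n) (Fin n) ℝ, W * (star W * X) = X := fun X => by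
    rw [← Matrix.mul_assoc, hW2, Matrix.one_mul]
  have collapse : ∀ M N : Matrix (Fin n) (Fin n) ℝ,
      (star W * M * W) * (star W * N * W) = star W * (M * N) * W := by
    intro M N
    calc (star W * M * W) * (star W * N * W)
        = star W * (M * (W * (star W * (N * W)))) := by simp only [Matrix.mul_assoc]
      _ = star W * (M * (N * W)) := by rw [hWl]
      _ = star W * (M * N) * W := by simp only [Matrix.mul_assoc]
  have hdiag2 : diagonal μ * diagonal μ + diagonal ν * diagonal ν = 1 := by
    rw [← hdA, ← hdB, collapse, collapse, ← Matrix.add_mul, ← Matrix.mul_add, hAABB,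
      Matrix.mul_one, hW1]
  have hμν : ∀ j, μ j ^ 2 + ν j ^ 2 = 1 := by
    intro j
    have h := congrFun (congrFun hdiag2 j) j
    simp only [Matrix.diagonal_mul_diagonal, Matrix.add_apply, Matrix.diagonal_apply_eq,
      Matrix.one_apply_eq, Pi.mul_apply] at h
    rw [pow_two, pow_two]
    exact h
  have hA2 : A = W * diagonal μ * star W := by
    rw [← hdA]
    simp only [Matrix.mul_assoc]
    rw [hW2, Matrix.mul_one, hWl]
  have hB2 : B = W * diagonal ν * star W := by
    rw [← hdB]
    simp only [Matrix.mul_assoc]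
    rw [hW2, Matrix.mul_one, hWl]
  -- complexify
  set W' : Matrix (Fin n) (Fin n) ℂ := W.map Complex.ofReal with hW'def
  have hW'1 : star W' * W' = 1 := by
    rw [hW'def, star_map_ofReal, ← map_ofReal_mul, hW1, map_ofReal_one]
  have hW'2 : W' * star W' = 1 := by
    rw [hW'def, star_map_ofReal, ← map_ofReal_mul, hW2, map_ofReal_one]
  set δ : Fin n → ℂ := fun j => (μ j : ℂ) + (ν j : ℂ) * Complex.I with hδdef
  have hdiagmap : ∀ d : Fin n → ℝ,
      (diagonal d).map Complex.ofReal = diagonal (fun j => (d j : ℂ)) :=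
    fun d => Matrix.diagonal_map (by simp)
  have hdδ : diagonal (fun j => (μ j : ℂ)) + Complex.I • diagonal (fun j => (ν j : ℂ))
      = diagonal δ := by
    ext i j
    rcases eq_or_ne i j with rfl | hij
    · simp only [Matrix.add_apply, Matrix.smul_apply, Matrix.diagonal_apply_eq, hδdef,
        smul_eq_mul]
      ring
    · simp [Matrix.diagonal_apply_ne _ hij, hij]
  have hA3 : A.map Complex.ofReal = W' * diagonal (fun j => (μ j : ℂ)) * star W' := by
    rw [hA2, map_ofReal_mul, map_ofReal_mul, hdiagmap, star_map_ofReal]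
  have hB3 : B.map Complex.ofReal = W' * diagonal (fun j => (ν j : ℂ)) * star W' := by
    rw [hB2, map_ofReal_mul, map_ofReal_mul, hdiagmap, star_map_ofReal]
  have hSW : S = W' * diagonal δ * star W' := by
    rw [hSplus, hA'def, hB'def, hA3, hB3, ← hdδ, Matrix.mul_add, Matrix.add_mul,
      Matrix.mul_smul, Matrix.smul_mul]
  -- square roots
  have hδabs : ∀ j, ‖δ j‖ = 1 := by
    intro j
    rw [hδdef]
    simp only
    rw [Complex.norm_def, Complex.normSq_add_mul_I, hμν j, Real.sqrt_one]
  have hδ0 : ∀ j, δ j ≠ 0 := by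
    intro j h
    have := hδabs j
    rw [h] at this
    simp at this
  set σ : Fin n → ℂ := fun j => Complex.exp (Complex.log (δ j) / 2) with hσdef
  have hσsq : ∀ j, σ j * σ j = δ j := by
    intro j
    rw [hσdef]
    simp only
    rw [← Complex.exp_add, add_halves, Complex.exp_log (hδ0 j)]
  have hσabs : ∀ j, ‖σ j‖ = 1 := by
    intro j
    have h2 : ‖σ j‖ * ‖σ j‖ = 1 := by
      rw [← norm_mul, hσsq, hδabs]
    have h0 : 0 ≤ ‖σ j‖ := norm_nonneg _
    rcases mul_self_eq_one_iff.mp h2 with h | h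
    · exact h
    · linarith
  have hσconj' : ∀ j, σ j * (starRingEnd ℂ) (σ j) = 1 := by
    intro j
    rw [Complex.mul_conj, Complex.normSq_eq_norm_sq, hσabs]
    simp
  have hσconj : ∀ j, (starRingEnd ℂ) (σ j) * σ j = 1 := by
    intro j
    rw [mul_comm]
    exact hσconj' j
  have hδσ : ∀ j, δ j * (starRingEnd ℂ) (σ j) = σ j := by
    intro j
    rw [← hσsq j, mul_assoc, hσconj' j, mul_one]
  set Dσ : Matrix (Fin n) (Fin n) ℂ := diagonal σ with hDσdef
  set Dcσ : Matrix (Fin n) (Fin n) ℂ := diagonal (fun j => (starRingEnd ℂ) (σ j)) with hDcσdef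
  have hDc : Dσ * Dcσ = 1 := by
    rw [hDσdef, hDcσdef, Matrix.diagonal_mul_diagonal, show
      (fun j => σ j * (starRingEnd ℂ) (σ j)) = fun _ => (1 : ℂ) from funext hσconj',
      Matrix.diagonal_one]
  have hDc' : Dcσ * Dσ = 1 := by
    rw [hDσdef, hDcσdef, Matrix.diagonal_mul_diagonal, show
      (fun j => (starRingEnd ℂ) (σ j) * σ j) = fun _ => (1 : ℂ) from funext hσconj,
      Matrix.diagonal_one]
  have hstarDcσ : star Dcσ = Dσ := by
    rw [Matrix.star_eq_conjTranspose, hDcσdef, Matrix.diagonal_conjTranspose]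
    ext i j
    rcases eq_or_ne i j with rfl | hij
    · simp [hDσdef, Matrix.diagonal_apply_eq, Pi.star_apply]
    · simp [hDσdef, Matrix.diagonal_apply_ne _ hij]
  -- the candidate left factor
  set Vc : Matrix (Fin n) (Fin n) ℂ := U * W' * Dcσ with hVcdef
  have hconjmul : ∀ M N : Matrix (Fin n) (Fin n) ℂ,
      (M * N).map (starRingEnd ℂ) = M.map (starRingEnd ℂ) * N.map (starRingEnd ℂ) :=
    fun M N => Matrix.map_mul (f := (starRingEnd ℂ))
  have hW'conj : W'.map (starRingEnd ℂ) = W' := by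
    ext i j
    simp [hW'def, Matrix.map_apply, Complex.conj_ofReal]
  have hDcσconj : Dcσ.map (starRingEnd ℂ) = Dσ := by
    rw [hDcσdef, hDσdef, Matrix.diagonal_map (by simp)]
    congr 1
    funext j
    simp
  have hDδc : diagonal δ * Dcσ = Dσ := by
    rw [hDcσdef, hDσdef, Matrix.diagonal_mul_diagonal,
      show (fun i => δ i * (starRingEnd ℂ) (σ i)) = σ from funext hδσ]
  have hWδ : W' * diagonal δ = S * W' := by
    rw [hSW]
    simp only [Matrix.mul_assoc]
    rw [hW'1, Matrix.mul_one]
  have hVconj : Vc.map (starRingEnd ℂ) = Vc := by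
    rw [hVcdef, hconjmul, hconjmul, hW'conj, hDcσconj]
    calc U.map (starRingEnd ℂ) * W' * Dσ
        = U.map (starRingEnd ℂ) * W' * (diagonal δ * Dcσ) := by rw [hDδc]
      _ = U.map (starRingEnd ℂ) * (W' * diagonal δ) * Dcσ := by simp only [Matrix.mul_assoc]
      _ = U.map (starRingEnd ℂ) * (S * W') * Dcσ := by rw [hWδ]
      _ = (U.map (starRingEnd ℂ) * Uᵀ) * (U * W' * Dcσ) := by
          rw [hSdef]; simp only [Matrix.mul_assoc]
      _ = U * W' * Dcσ := by rw [hUconj, Matrix.one_mul]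
  set Vr : Matrix (Fin n) (Fin n) ℝ := Vc.map Complex.re with hVrdef
  have hVcreal : Vc = Vr.map Complex.ofReal := by
    ext i j
    have h : (starRingEnd ℂ) (Vc i j) = Vc i j := congrFun (congrFun hVconj i) j
    have := Complex.conj_eq_iff_re.mp h
    simp only [hVrdef, Matrix.map_apply]
    exact this.symm
  -- unitarity of Vc
  have cancel : ∀ (M : Matrix (Fin n) (Fin n) ℂ), star M * M = 1 →
      ∀ X : Matrix (Fin n) (Fin n) ℂ, star M * (M * X) = X := by
    intro M hM X
    rw [← Matrix.mul_assoc, hM, Matrix.one_mul]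
  have hVcU : star Vc * Vc = 1 := by
    rw [hVcdef, Matrix.star_mul, Matrix.star_mul]
    calc star Dcσ * (star W' * star U) * (U * W' * Dcσ)
        = star Dcσ * (star W' * (star U * (U * (W' * Dcσ)))) := by simp only [Matrix.mul_assoc]
      _ = star Dcσ * (star W' * (W' * Dcσ)) := by rw [cancel U hUl]
      _ = star Dcσ * Dcσ := by rw [cancel W' hW'1]
      _ = 1 := by rw [hstarDcσ, hDc]
  have hVrO : Vr ∈ Matrix.orthogonalGroup (Fin n) ℝ := by
    rw [Matrix.mem_orthogonalGroup_iff']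
    apply map_ofReal_inj
    rw [map_ofReal_mul, show Vrᵀ = star Vr by ext i j; simp, ← star_map_ofReal, ← hVcreal, hVcU, map_ofReal_one]
  -- the decomposition
  have hUdec : U = Vc * Dσ * star W' := by
    rw [hVcdef]
    rw [Matrix.mul_assoc (U * W') Dcσ Dσ, hDc', Matrix.mul_one, Matrix.mul_assoc, hW'2,
      Matrix.mul_one]
  -- sign fixing
  obtain ⟨V₁, ε₁, hV₁O, hV₁det, hε₁, hVrdec⟩ := sign_fix hn Vr hVrO
  obtain ⟨W₂, ε₂, hW₂O, hW₂det, hε₂, hWdec⟩ := sign_fix hn W hWO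
  have hstarW₂O : star W₂ ∈ Matrix.orthogonalGroup (Fin n) ℝ := Unitary.star_mem hW₂O
  have hstarW₂det : (star W₂).det = 1 := by
    rw [Matrix.star_eq_conjTranspose, Matrix.det_conjTranspose, hW₂det]
    simp
  have hstarWdec : star W = diagonal ε₂ * star W₂ := by
    rw [hWdec, Matrix.star_mul]
    congr 1
    simp [Matrix.star_eq_conjTranspose, Matrix.diagonal_conjTranspose]
  set d : Fin n → ℂ := fun j => (ε₁ j : ℂ) * σ j * (ε₂ j : ℂ) with hddef
  have habs1 : ∀ x : ℝ, x ^ 2 = 1 → ‖(x : ℂ)‖ = 1 := by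
    intro x hx
    rw [Complex.norm_real, Real.norm_eq_abs, abs_eq (by norm_num : (0:ℝ) ≤ 1)]
    rcases mul_self_eq_one_iff.mp (by nlinarith [hx] : x * x = 1) with h | h
    · exact Or.inl h
    · exact Or.inr h
  have hdabs : ∀ j, ‖d j‖ = 1 := by
    intro j
    rw [hddef]
    simp only
    rw [norm_mul, norm_mul, habs1 _ (hε₁ j),
      habs1 _ (hε₂ j), hσabs]
    norm_num
  refine ⟨V₁, star W₂, hV₁O, hV₁det, hstarW₂O, hstarW₂det, d, hdabs, ?_⟩
  have hmapε₁ : (diagonal ε₁).map Complex.ofReal = diagonal (fun j => (ε₁ j : ℂ)) :=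
    hdiagmap ε₁
  have hmapε₂ : (diagonal ε₂).map Complex.ofReal = diagonal (fun j => (ε₂ j : ℂ)) :=
    hdiagmap ε₂
  calc U = Vc * Dσ * star W' := hUdec
    _ = Vr.map Complex.ofReal * Dσ * (star W).map Complex.ofReal := by
        rw [← hVcreal, hW'def, star_map_ofReal]
    _ = (V₁ * diagonal ε₁).map Complex.ofReal * Dσ *
        (diagonal ε₂ * star W₂).map Complex.ofReal := by rw [← hVrdec, ← hstarWdec]
    _ = V₁.map Complex.ofReal * (diagonal (fun j => (ε₁ j : ℂ)) * Dσ *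
        diagonal (fun j => (ε₂ j : ℂ))) * (star W₂).map Complex.ofReal := by
        rw [map_ofReal_mul, map_ofReal_mul, hmapε₁, hmapε₂]
        simp only [Matrix.mul_assoc]
    _ = V₁.map Complex.ofReal * diagonal d * (star W₂).map Complex.ofReal := by
        rw [hDσdef, Matrix.diagonal_mul_diagonal, Matrix.diagonal_mul_diagonal]
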